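/- arXiv:2304.04593 — 7 statements merged into one kernel-verified Lean document; each statement's English description precedes it below -/
import Mathlib

section
/- Let 𝒜 ∈ Sp(2d,ℝ) with d×d block decomposition (A_{ij})_{i,j=1..4}, and let E_𝒜, F_𝒜, ℰ_𝒜, ℱ_𝒜 be the associated 2d×2d submatrices. Then E_𝒜ᵀF_𝒜 − F_𝒜ᵀE_𝒜 = J, ℰ_𝒜ᵀℱ_𝒜 − ℱ_𝒜ᵀℰ_𝒜 = J, and E_𝒜ᵀℱ_𝒜 − F_𝒜ᵀℰ_𝒜 = 0, where J = [[0, I_d], [−I_d, 0]]. -/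
open Matrix

def Jmat (n : Type*) [DecidableEq n] [Fintype n] : Matrix (n ⊕ n) (n ⊕ n) ℝ :=
  Matrix.fromBlocks 0 1 (-1) 0

def IsSymplectic {n : Type*} [DecidableEq n] [Fintype n]
    (S : Matrix (n ⊕ n) (n ⊕ n) ℝ) : Prop :=
  Sᵀ * Jmat n * S = Jmat n

def quad {d : ℕ} (A11 A12 A13 A14 A21 A22 A23 A24 A31 A32 A33 A34 A41 A42 A43 A44 :
    Matrix (Fin d) (Fin d) ℝ) :
    Matrix ((Fin d ⊕ Fin d) ⊕ (Fin d ⊕ Fin d)) ((Fin d ⊕ Fin d) ⊕ (Fin d ⊕ Fin d)) ℝ :=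
  Matrix.fromBlocks (Matrix.fromBlocks A11 A12 A21 A22) (Matrix.fromBlocks A13 A14 A23 A24)
    (Matrix.fromBlocks A31 A32 A41 A42) (Matrix.fromBlocks A33 A34 A43 A44)

def Lmat {d : ℕ} : Matrix (Fin d ⊕ Fin d) (Fin d ⊕ Fin d) ℝ := Matrix.fromBlocks 0 1 1 0

def Pmat {d : ℕ} : Matrix (Fin d ⊕ Fin d) (Fin d ⊕ Fin d) ℝ := Matrix.fromBlocks 0 1 0 0

def Qmat {d : ℕ} : Matrix (Fin d ⊕ Fin d) (Fin d ⊕ Fin d) ℝ := Matrix.fromBlocks 1 0 0 (-1)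

/-!
The entries of `Sᵀ J S` are the values of the symplectic form on pairs of columns of `S`, and for
columns `x = (u, u')`, `y = (v, v')` split into upper and lower halves this form is
`xᵀ J y = uᵀ v' - u'ᵀ v`. The matrices `E, F` (resp. `ℰ, ℱ`) are the upper and lower halves of the
columns of `𝒜` in blocks 1 and 3 (resp. 2 and 4), so the three differences are submatrices of
`𝒜ᵀ J 𝒜 = J`, and these submatrices of `J` are `J`, `J` and `0`.
-/

section SymplecticGram

variable {n m k l : Type*} [DecidableEq n] [Fintype n]

theorem transpose_mul_Jmat_mul (S : Matrix (n ⊕ n) m ℝ) :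
    Sᵀ * Jmat n * S = S.toRows₁ᵀ * S.toRows₂ - S.toRows₂ᵀ * S.toRows₁ := by
  rw [← fromRows_toRows S, transpose_fromRows, Matrix.mul_assoc, Jmat, fromBlocks_mul_fromRows,
    fromCols_mul_fromRows]
  simp [sub_eq_add_neg]

theorem submatrix_transpose_mul_Jmat_mul (S : Matrix (n ⊕ n) m ℝ) (c : k → m) (c' : l → m) :
    (Sᵀ * Jmat n * S).submatrix c c' =
      (S.submatrix Sum.inl c)ᵀ * S.submatrix Sum.inr c' -
        (S.submatrix Sum.inr c)ᵀ * S.submatrix Sum.inl c' := by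
  rw [transpose_mul_Jmat_mul, submatrix_sub, Pi.sub_apply, Pi.sub_apply,
    submatrix_mul _ _ _ id _ Function.bijective_id, submatrix_mul _ _ _ id _ Function.bijective_id]
  rfl

end SymplecticGram

section JmatSubmatrix

variable (n₁ n₂ : Type*) [DecidableEq n₁] [Fintype n₁] [DecidableEq n₂] [Fintype n₂]

theorem Jmat_submatrix_map_inl :
    (Jmat (n₁ ⊕ n₂)).submatrix (Sum.map Sum.inl Sum.inl) (Sum.map Sum.inl Sum.inl) = Jmat n₁ := by
  ext (i | i) (j | j) <;> simp [Jmat, one_apply]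

theorem Jmat_submatrix_map_inr :
    (Jmat (n₁ ⊕ n₂)).submatrix (Sum.map Sum.inr Sum.inr) (Sum.map Sum.inr Sum.inr) = Jmat n₂ := by
  ext (i | i) (j | j) <;> simp [Jmat, one_apply]

theorem Jmat_submatrix_map_inl_map_inr :
    (Jmat (n₁ ⊕ n₂)).submatrix (Sum.map Sum.inl Sum.inl) (Sum.map Sum.inr Sum.inr) = 0 := by
  ext (i | i) (j | j) <;> simp [Jmat]

end JmatSubmatrix

/-- the fundamental relations of the submatrices E, F, ℰ, ℱ of a
symplectic matrix 𝒜 ∈ Sp(2d,ℝ). -/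
theorem stmt1 {d : ℕ}
    (A11 A12 A13 A14 A21 A22 A23 A24 A31 A32 A33 A34 A41 A42 A43 A44 :
      Matrix (Fin d) (Fin d) ℝ)
    (h : IsSymplectic
      (quad A11 A12 A13 A14 A21 A22 A23 A24 A31 A32 A33 A34 A41 A42 A43 A44)) :
    (Matrix.fromBlocks A11 A13 A21 A23)ᵀ * Matrix.fromBlocks A31 A33 A41 A43 -
        (Matrix.fromBlocks A31 A33 A41 A43)ᵀ * Matrix.fromBlocks A11 A13 A21 A23 =
      Jmat (Fin d) ∧
    (Matrix.fromBlocks A12 A14 A22 A24)ᵀ * Matrix.fromBlocks A32 A34 A42 A44 -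
        (Matrix.fromBlocks A32 A34 A42 A44)ᵀ * Matrix.fromBlocks A12 A14 A22 A24 =
      Jmat (Fin d) ∧
    (Matrix.fromBlocks A11 A13 A21 A23)ᵀ * Matrix.fromBlocks A32 A34 A42 A44 -
        (Matrix.fromBlocks A31 A33 A41 A43)ᵀ * Matrix.fromBlocks A12 A14 A22 A24 = 0 := by
  set S := quad A11 A12 A13 A14 A21 A22 A23 A24 A31 A32 A33 A34 A41 A42 A43 A44
  have hE : fromBlocks A11 A13 A21 A23 = S.submatrix Sum.inl (Sum.map Sum.inl Sum.inl) := by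
    ext (i | i) (j | j) <;> rfl
  have hF : fromBlocks A31 A33 A41 A43 = S.submatrix Sum.inr (Sum.map Sum.inl Sum.inl) := by
    ext (i | i) (j | j) <;> rfl
  have hℰ : fromBlocks A12 A14 A22 A24 = S.submatrix Sum.inl (Sum.map Sum.inr Sum.inr) := by
    ext (i | i) (j | j) <;> rfl
  have hℱ : fromBlocks A32 A34 A42 A44 = S.submatrix Sum.inr (Sum.map Sum.inr Sum.inr) := by
    ext (i | i) (j | j) <;> rfl
  rw [hE, hF, hℰ, hℱ, ← submatrix_transpose_mul_Jmat_mul, ← submatrix_transpose_mul_Jmat_mul,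
    ← submatrix_transpose_mul_Jmat_mul, h]
  exact ⟨Jmat_submatrix_map_inl .., Jmat_submatrix_map_inr .., Jmat_submatrix_map_inl_map_inr ..⟩
end

section
/- Let 𝒜 ∈ Sp(2d,ℝ) with submatrices E_𝒜, ℰ_𝒜, and let L = [[0, I_d], [I_d, 0]]. If E_𝒜 is invertible, then the 2d×2d matrix G_𝒜 := L E_𝒜^{−1} ℰ_𝒜 belongs to Sp(d,ℝ), i.e. G_𝒜ᵀ J G_𝒜 = J. -/
open Matrix

/-!
Reading the symplectic condition in the form `𝒜 J 𝒜ᵀ = J` on its top-left `2d × 2d` block gives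
`E J Eᵀ + ℰ J ℰᵀ = 0`, so `K = E⁻¹ ℰ` satisfies `K J Kᵀ = -J`. A matrix with `M J Mᵀ = c J`,
`c ≠ 0`, also satisfies `Mᵀ J M = c J`, hence `Kᵀ J K = -J`, and since `L J L = -J` the matrix
`L K` is symplectic.
-/

namespace Jmat

variable {n : Type*} [DecidableEq n] [Fintype n]

theorem mul_self : Jmat n * Jmat n = -1 := by
  simp [Jmat, fromBlocks_multiply, ← fromBlocks_one, fromBlocks_neg]

theorem transpose_mul_mul_eq_smul {M : Matrix (n ⊕ n) (n ⊕ n) ℝ} {c : ℝ} (hc : c ≠ 0)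
    (h : M * Jmat n * Mᵀ = c • Jmat n) : Mᵀ * Jmat n * M = c • Jmat n := by
  set J := Jmat n
  have hright : M * (-c⁻¹ • (J * Mᵀ * J)) = 1 := by
    rw [mul_smul_comm, ← Matrix.mul_assoc, ← Matrix.mul_assoc, h, smul_mul_assoc, mul_self]
    simp [smul_smul, hc]
  have hleft : J * Mᵀ * J * M = -c • 1 := by
    have := congrArg (-c • ·) (mul_eq_one_comm.mp hright)
    simpa [smul_smul, hc] using this
  calc Mᵀ * J * M = -(J * J) * (Mᵀ * J * M) := by rw [mul_self, neg_neg, Matrix.one_mul]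
    _ = -J * (J * Mᵀ * J * M) := by simp only [neg_mul, Matrix.mul_assoc]
    _ = c • J := by rw [hleft]; simp

theorem inv_mul_mul_transpose_eq_neg {E F : Matrix (n ⊕ n) (n ⊕ n) ℝ} (hE : IsUnit E.det)
    (hEF : E * Jmat n * Eᵀ + F * Jmat n * Fᵀ = 0) :
    E⁻¹ * F * Jmat n * (E⁻¹ * F)ᵀ = -Jmat n := by
  have hF : F * Jmat n * Fᵀ = -(E * Jmat n * Eᵀ) := eq_neg_of_add_eq_zero_right hEF
  calc E⁻¹ * F * Jmat n * (E⁻¹ * F)ᵀ = E⁻¹ * (F * Jmat n * Fᵀ) * E⁻¹ᵀ := by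
        simp only [transpose_mul, Matrix.mul_assoc]
    _ = -((E⁻¹ * E) * Jmat n * (Eᵀ * E⁻¹ᵀ)) := by
        simp only [hF, Matrix.mul_neg, Matrix.neg_mul, Matrix.mul_assoc]
    _ = -Jmat n := by
        rw [nonsing_inv_mul E hE, transpose_nonsing_inv,
          mul_nonsing_inv _ (by rwa [det_transpose])]
        simp

end Jmat

theorem IsSymplectic.mul_Jmat_mul_transpose {n : Type*} [DecidableEq n] [Fintype n]
    {S : Matrix (n ⊕ n) (n ⊕ n) ℝ} (hS : IsSymplectic S) : S * Jmat n * Sᵀ = Jmat n := by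
  have hSt : Sᵀ * Jmat n * Sᵀᵀ = (1 : ℝ) • Jmat n := by
    rw [transpose_transpose, one_smul]; exact hS
  simpa using Jmat.transpose_mul_mul_eq_smul one_ne_zero hSt

theorem Lmat_transpose {d : ℕ} : (Lmat (d := d))ᵀ = Lmat := by
  simp [Lmat, fromBlocks_transpose]

theorem Lmat_mul_Jmat_mul_Lmat {d : ℕ} : Lmat * Jmat (Fin d) * Lmat = -Jmat (Fin d) := by
  simp [Lmat, Jmat, fromBlocks_multiply, fromBlocks_neg]

theorem isSymplectic_Lmat_mul {d : ℕ} {K : Matrix (Fin d ⊕ Fin d) (Fin d ⊕ Fin d) ℝ}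
    (hK : K * Jmat (Fin d) * Kᵀ = -Jmat (Fin d)) : IsSymplectic (Lmat * K) := by
  have hKt : Kᵀ * Jmat (Fin d) * K = -Jmat (Fin d) := by
    simpa using Jmat.transpose_mul_mul_eq_smul (c := -1) (by norm_num) (by simpa using hK)
  calc (Lmat * K)ᵀ * Jmat (Fin d) * (Lmat * K) = Kᵀ * (Lmat * Jmat (Fin d) * Lmat) * K := by
        simp only [transpose_mul, Lmat_transpose, Matrix.mul_assoc]
    _ = Jmat (Fin d) := by
        rw [Lmat_mul_Jmat_mul_Lmat, Matrix.mul_neg, Matrix.neg_mul, hKt, neg_neg]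

theorem quad_mul_Jmat_mul_transpose_toBlocks₁₁ {d : ℕ}
    (A11 A12 A13 A14 A21 A22 A23 A24 A31 A32 A33 A34 A41 A42 A43 A44 :
      Matrix (Fin d) (Fin d) ℝ) :
    (quad A11 A12 A13 A14 A21 A22 A23 A24 A31 A32 A33 A34 A41 A42 A43 A44 * Jmat _ *
        (quad A11 A12 A13 A14 A21 A22 A23 A24 A31 A32 A33 A34 A41 A42 A43 A44)ᵀ).toBlocks₁₁ =
      fromBlocks A11 A13 A21 A23 * Jmat (Fin d) * (fromBlocks A11 A13 A21 A23)ᵀ +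
        fromBlocks A12 A14 A22 A24 * Jmat (Fin d) * (fromBlocks A12 A14 A22 A24)ᵀ := by
  simp only [quad, Jmat, fromBlocks_multiply, fromBlocks_transpose, toBlocks_fromBlocks₁₁,
    fromBlocks_add, fromBlocks_neg, Matrix.mul_zero, Matrix.mul_one, Matrix.mul_neg,
    Matrix.neg_mul, add_zero, zero_add]
  congr 1 <;> abel

/-- if E_𝒜 is invertible then G_𝒜 = L E_𝒜⁻¹ ℰ_𝒜 is symplectic. -/
theorem stmt3 {d : ℕ}
    (A11 A12 A13 A14 A21 A22 A23 A24 A31 A32 A33 A34 A41 A42 A43 A44 :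
      Matrix (Fin d) (Fin d) ℝ)
    (h : IsSymplectic
      (quad A11 A12 A13 A14 A21 A22 A23 A24 A31 A32 A33 A34 A41 A42 A43 A44))
    (hE : IsUnit (Matrix.fromBlocks A11 A13 A21 A23).det) :
    IsSymplectic
      (Lmat * (Matrix.fromBlocks A11 A13 A21 A23)⁻¹ * Matrix.fromBlocks A12 A14 A22 A24) := by
  have hEF := quad_mul_Jmat_mul_transpose_toBlocks₁₁
    A11 A12 A13 A14 A21 A22 A23 A24 A31 A32 A33 A34 A41 A42 A43 A44
  rw [h.mul_Jmat_mul_transpose, Jmat, toBlocks_fromBlocks₁₁] at hEF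
  rw [Matrix.mul_assoc]
  exact isSymplectic_Lmat_mul (Jmat.inv_mul_mul_transpose_eq_neg hE hEF.symm)
end

section
/- Let 𝒜 ∈ Sp(2d,ℝ) with submatrices E_𝒜, ℰ_𝒜. If E_𝒜 is invertible, then ℰ_𝒜 is invertible and det(ℰ_𝒜) = (−1)^d det(E_𝒜). -/
open Matrix

/-!
Regrouping the block columns of `𝒜` as `(1, 3 | 2, 4)` turns `𝒜ᵀ J 𝒜 = J` into the relations
`GᵀE - EᵀG = J = HᵀF - FᵀH` and `GᵀF = EᵀH`, where `E = E_𝒜`, `F = ℰ_𝒜` and `G`, `H` are the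
corresponding lower blocks. For `Y = E⁻¹F` they give `Yᵀ J Y = -J`, so `diag(1, -1) * Y` is
symplectic, hence of determinant `1`, and `det F = det E * det Y = (-1)^d * det E`.
-/

namespace Matrix

variable {n R : Type*} [CommRing R]

theorem J_submatrix_sumSumSumComm [DecidableEq n] :
    (J (n ⊕ n) R).submatrix (Equiv.sumSumSumComm n n n n) (Equiv.sumSumSumComm n n n n) =
      fromBlocks (J n R) 0 0 (J n R) := by
  ext (i | i) (j | j) <;> rcases i with i | i <;> rcases j with j | j <;> simp [J, one_apply]

theorem transpose_mul_J_mul_submatrix_sumSumSumComm [DecidableEq n] [Fintype n]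
    {S : Matrix ((n ⊕ n) ⊕ (n ⊕ n)) ((n ⊕ n) ⊕ (n ⊕ n)) R}
    (hS : Sᵀ * J (n ⊕ n) R * S = J (n ⊕ n) R) :
    (S.submatrix id (Equiv.sumSumSumComm n n n n))ᵀ * J (n ⊕ n) R *
        S.submatrix id (Equiv.sumSumSumComm n n n n) =
      fromBlocks (J n R) 0 0 (J n R) := by
  set σ := Equiv.sumSumSumComm n n n n
  rw [← J_submatrix_sumSumSumComm, transpose_submatrix]
  conv_rhs => rw [← hS]
  change Sᵀ.submatrix σ (Equiv.refl _) * (J (n ⊕ n) R).submatrix (Equiv.refl _) (Equiv.refl _) *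
    S.submatrix (Equiv.refl _) σ = _
  rw [submatrix_mul_equiv, submatrix_mul_equiv]

theorem fromBlocks_transpose_mul_J_mul_fromBlocks [DecidableEq n] [Fintype n]
    (E F G H : Matrix n n R) :
    (fromBlocks E F G H)ᵀ * J n R * fromBlocks E F G H =
      fromBlocks (Gᵀ * E - Eᵀ * G) (Gᵀ * F - Eᵀ * H) (Hᵀ * E - Fᵀ * G) (Hᵀ * F - Fᵀ * H) := by
  simp only [J, fromBlocks_transpose, fromBlocks_multiply, Matrix.mul_zero, Matrix.mul_neg,
    Matrix.mul_one, add_zero, zero_add, neg_mul]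
  congr 1 <;> abel

theorem transpose_mul_mul_eq_neg_of_eq_mul [Fintype n] {Ω E F G H Y : Matrix n n R}
    (hF : F = E * Y) (h₁ : Gᵀ * E - Eᵀ * G = Ω) (h₂ : Gᵀ * F = Eᵀ * H)
    (h₃ : Hᵀ * F - Fᵀ * H = Ω) :
    Yᵀ * Ω * Y = -Ω := by
  subst hF
  have h₂' : Yᵀ * Eᵀ * G = Hᵀ * E := by
    simpa [transpose_mul, Matrix.mul_assoc] using congrArg transpose h₂
  calc Yᵀ * Ω * Y = Yᵀ * (Gᵀ * (E * Y)) - Yᵀ * Eᵀ * G * Y := by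
        simp only [← h₁, Matrix.mul_sub, Matrix.sub_mul, Matrix.mul_assoc]
    _ = -Ω := by
        rw [h₂, h₂', ← h₃, transpose_mul]; simp only [neg_sub, Matrix.mul_assoc]

theorem det_eq_neg_one_pow_of_transpose_mul_J_mul_eq_neg_J [DecidableEq n] [Fintype n]
    {Y : Matrix (n ⊕ n) (n ⊕ n) R} (hY : Yᵀ * J n R * Y = -J n R) :
    Y.det = (-1) ^ Fintype.card n := by
  set D : Matrix (n ⊕ n) (n ⊕ n) R := fromBlocks 1 0 0 (-1)
  have hD : Dᵀ * J n R * D = -J n R := by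
    simp [D, J, fromBlocks_transpose, fromBlocks_multiply, fromBlocks_neg]
  have hDY : D * Y ∈ symplecticGroup n R := by
    rw [SymplecticGroup.mem_iff', transpose_mul]
    calc Yᵀ * Dᵀ * J n R * (D * Y) = Yᵀ * (Dᵀ * J n R * D) * Y := by
          simp only [Matrix.mul_assoc]
      _ = J n R := by rw [hD, Matrix.mul_neg, Matrix.neg_mul, hY, neg_neg]
  have hdetD : D.det = (-1) ^ Fintype.card n := by
    simp [D, det_fromBlocks_zero₂₁, det_neg]
  have hdetDY := SymplecticGroup.det_eq_one hDY
  rw [det_mul, hdetD] at hdetDY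
  calc Y.det = (-1) ^ Fintype.card n * ((-1) ^ Fintype.card n * Y.det) := by
        rw [← mul_assoc, ← pow_add, ← two_mul, pow_mul]; simp
    _ = (-1) ^ Fintype.card n := by rw [hdetDY, mul_one]

end Matrix

theorem isSymplectic_iff_transpose_mul_J_mul {n : Type*} [DecidableEq n] [Fintype n]
    {S : Matrix (n ⊕ n) (n ⊕ n) ℝ} :
    IsSymplectic S ↔ Sᵀ * J n ℝ * S = J n ℝ := by
  have hJ : Jmat n = -J n ℝ := by
    ext (i | i) (j | j) <;> simp [Jmat, J]
  rw [IsSymplectic, hJ, Matrix.mul_neg, Matrix.neg_mul, neg_inj]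

theorem quad_submatrix_sumSumSumComm {d : ℕ}
    (A11 A12 A13 A14 A21 A22 A23 A24 A31 A32 A33 A34 A41 A42 A43 A44 : Matrix (Fin d) (Fin d) ℝ) :
    (quad A11 A12 A13 A14 A21 A22 A23 A24 A31 A32 A33 A34 A41 A42 A43 A44).submatrix id
        (Equiv.sumSumSumComm _ _ _ _) =
      fromBlocks (fromBlocks A11 A13 A21 A23) (fromBlocks A12 A14 A22 A24)
        (fromBlocks A31 A33 A41 A43) (fromBlocks A32 A34 A42 A44) := by
  ext (i | i) (j | j) <;> rcases i with i | i <;> rcases j with j | j <;> rfl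

/-- if E_𝒜 is invertible then ℰ_𝒜 is invertible and
det(ℰ_𝒜) = (−1)^d det(E_𝒜). -/
theorem stmt4 {d : ℕ}
    (A11 A12 A13 A14 A21 A22 A23 A24 A31 A32 A33 A34 A41 A42 A43 A44 :
      Matrix (Fin d) (Fin d) ℝ)
    (h : IsSymplectic
      (quad A11 A12 A13 A14 A21 A22 A23 A24 A31 A32 A33 A34 A41 A42 A43 A44))
    (hE : IsUnit (Matrix.fromBlocks A11 A13 A21 A23).det) :
    IsUnit (Matrix.fromBlocks A12 A14 A22 A24).det ∧
    (Matrix.fromBlocks A12 A14 A22 A24).det =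
      (-1 : ℝ) ^ d * (Matrix.fromBlocks A11 A13 A21 A23).det := by
  set E := fromBlocks A11 A13 A21 A23
  set F := fromBlocks A12 A14 A22 A24
  set G := fromBlocks A31 A33 A41 A43
  set H := fromBlocks A32 A34 A42 A44
  obtain ⟨h₁, h₂, -, h₃⟩ : Gᵀ * E - Eᵀ * G = J (Fin d) ℝ ∧ Gᵀ * F - Eᵀ * H = 0 ∧
      Hᵀ * E - Fᵀ * G = 0 ∧ Hᵀ * F - Fᵀ * H = J (Fin d) ℝ := by
    have := transpose_mul_J_mul_submatrix_sumSumSumComm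
      (isSymplectic_iff_transpose_mul_J_mul.mp h)
    rwa [quad_submatrix_sumSumSumComm, fromBlocks_transpose_mul_J_mul_fromBlocks,
      fromBlocks_inj] at this
  have hF : F = E * (E⁻¹ * F) := (mul_nonsing_inv_cancel_left E F hE).symm
  have hY := transpose_mul_mul_eq_neg_of_eq_mul hF h₁ (sub_eq_zero.mp h₂) h₃
  have hdetF : F.det = (-1) ^ d * E.det := by
    rw [hF, det_mul, det_eq_neg_one_pow_of_transpose_mul_J_mul_eq_neg_J hY, Fintype.card_fin,
      mul_comm]
  exact ⟨hdetF ▸ (isUnit_neg_one.pow d).mul hE, hdetF⟩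
end

section
/- Let 𝒜 ∈ Sp(2d,ℝ) with d×d blocks (A_{ij}), submatrices E_𝒜, F_𝒜, and P = [[0, I_d], [0, 0]]. Then the 2d×2d matrix M_𝒜 := E_𝒜ᵀ F_𝒜 − P is symmetric, and M_𝒜 = [[A_{11}ᵀA_{31} + A_{21}ᵀA_{41}, A_{31}ᵀA_{13} + A_{41}ᵀA_{23}], [A_{13}ᵀA_{31} + A_{23}ᵀA_{41}, A_{13}ᵀA_{33} + A_{23}ᵀA_{43}]]. -/
/-!
The block columns 1 and 3 of `𝒜` are symplectic partners, so the columns of `𝒜` they select form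
the `4d × 2d` matrix `[E_𝒜; F_𝒜]`, and restricting `𝒜ᵀ J 𝒜 = J` to them gives
`E_𝒜ᵀ F_𝒜 - F_𝒜ᵀ E_𝒜 = J = P - Pᵀ`, which says exactly that `M_𝒜` is symmetric. Multiplying out
the blocks gives `M_𝒜` except in the upper right corner, which symmetry identifies with the
transpose of the lower left one.
-/

open Matrix

section

variable {m n : Type*} [DecidableEq m] [Fintype m] [DecidableEq n] [Fintype n]

theorem Jmat_submatrix_sumMap {g : m → n} (hg : Function.Injective g) :
    (Jmat n).submatrix (Sum.map g g) (Sum.map g g) = Jmat m := by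
  ext (i | i) (j | j) <;> simp [Jmat, one_apply, hg.eq_iff]

theorem IsSymplectic.transpose_mul_Jmat_mul_submatrix {S : Matrix (n ⊕ n) (n ⊕ n) ℝ}
    (hS : IsSymplectic S) {g : m → n} (hg : Function.Injective g) :
    (S.submatrix id (Sum.map g g))ᵀ * Jmat n * S.submatrix id (Sum.map g g) = Jmat m := by
  rw [transpose_submatrix, ← submatrix_id_id (Jmat n), ← submatrix_mul _ _ _ _ _
    Function.bijective_id, ← submatrix_mul _ _ _ _ _ Function.bijective_id, hS,
    Jmat_submatrix_sumMap hg]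

end

theorem transpose_fromRows_mul_Jmat_mul_fromRows {m n : Type*} [DecidableEq n] [Fintype n]
    (E F : Matrix n m ℝ) :
    (fromRows E F)ᵀ * Jmat n * fromRows E F = Eᵀ * F - Fᵀ * E := by
  rw [Matrix.mul_assoc, Jmat, fromBlocks_mul_fromRows, transpose_fromRows,
    fromCols_mul_fromRows]
  simp [sub_eq_add_neg]

theorem Jmat_eq_Pmat_sub_transpose {d : ℕ} : Jmat (Fin d) = Pmat - Pmatᵀ := by
  simp [Jmat, Pmat, fromBlocks_transpose, sub_eq_add_neg, fromBlocks_neg, fromBlocks_add]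

theorem transpose_sub_eq_self_of_sub_transpose_eq {n α : Type*} [AddCommGroup α]
    {N P : Matrix n n α}
    (h : N - Nᵀ = P - Pᵀ) : (N - P)ᵀ = N - P := by
  rw [transpose_sub, sub_eq_sub_iff_sub_eq_sub, ← neg_sub N, h, neg_sub]

/-- M_𝒜 = E_𝒜ᵀF_𝒜 − P is symmetric, with the explicit block form. -/
theorem stmt6 {d : ℕ}
    (A11 A12 A13 A14 A21 A22 A23 A24 A31 A32 A33 A34 A41 A42 A43 A44 :
      Matrix (Fin d) (Fin d) ℝ)
    (h : IsSymplectic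
      (quad A11 A12 A13 A14 A21 A22 A23 A24 A31 A32 A33 A34 A41 A42 A43 A44)) :
    ((Matrix.fromBlocks A11 A13 A21 A23)ᵀ * Matrix.fromBlocks A31 A33 A41 A43 - Pmat)ᵀ =
      (Matrix.fromBlocks A11 A13 A21 A23)ᵀ * Matrix.fromBlocks A31 A33 A41 A43 - Pmat ∧
    (Matrix.fromBlocks A11 A13 A21 A23)ᵀ * Matrix.fromBlocks A31 A33 A41 A43 - Pmat =
      Matrix.fromBlocks (A11ᵀ * A31 + A21ᵀ * A41) (A31ᵀ * A13 + A41ᵀ * A23)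
        (A13ᵀ * A31 + A23ᵀ * A41) (A13ᵀ * A33 + A23ᵀ * A43) := by
  set E := fromBlocks A11 A13 A21 A23
  set F := fromBlocks A31 A33 A41 A43
  have hEF : (quad A11 A12 A13 A14 A21 A22 A23 A24 A31 A32 A33 A34 A41 A42 A43 A44).submatrix id
      (Sum.map Sum.inl Sum.inl) = fromRows E F := by
    ext ((i | i) | (i | i)) (j | j) <;> rfl
  have hJ : Eᵀ * F - Fᵀ * E = Jmat (Fin d) := by
    rw [← transpose_fromRows_mul_Jmat_mul_fromRows, ← hEF]
    exact h.transpose_mul_Jmat_mul_submatrix Sum.inl_injective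
  have hsymm : (Eᵀ * F - Pmat)ᵀ = Eᵀ * F - Pmat := by
    refine transpose_sub_eq_self_of_sub_transpose_eq ?_
    rw [transpose_mul, transpose_transpose, hJ, Jmat_eq_Pmat_sub_transpose]
  have hblocks : Eᵀ * F - Pmat = fromBlocks (A11ᵀ * A31 + A21ᵀ * A41)
      (A11ᵀ * A33 + A21ᵀ * A43 - 1) (A13ᵀ * A31 + A23ᵀ * A41) (A13ᵀ * A33 + A23ᵀ * A43) := by
    simp [E, F, Pmat, fromBlocks_transpose, fromBlocks_multiply, sub_eq_add_neg, fromBlocks_neg,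
      fromBlocks_add]
  refine ⟨hsymm, ?_⟩
  rw [hblocks] at hsymm ⊢
  obtain ⟨-, -, hcorner, -⟩ := isSymm_fromBlocks_iff.1 hsymm
  rw [← hcorner]
  simp [transpose_add, transpose_mul]
end

section
/- Let 𝒜 ∈ Sp(2d,ℝ) with submatrices E_𝒜, F_𝒜, ℰ_𝒜, and assume E_𝒜 is invertible. Set M_𝒜 = E_𝒜ᵀF_𝒜 − P, G_𝒜 = L E_𝒜^{−1} ℰ_𝒜, and write G_𝒜 in d×d blocks as G_𝒜 = [[A, B], [C, D]]. Then 𝒜 = 𝒟_{E_𝒜^{−1}} · V_{M_𝒜} · V_Lᵀ · Lift(G_𝒜), where 𝒟_{E_𝒜^{−1}} = [[E_𝒜, 0], [0, E_𝒜^{−T}]] and V_{M_𝒜} = [[I_{2d}, 0], [M_𝒜, I_{2d}]] and V_Lᵀ = [[I_{2d}, L], [0, I_{2d}]] (in 2d×2d blocks), and Lift(G_𝒜) is the 4d×4d matrix with d×d blocks [[I, 0, 0, 0], [0, A, 0, B], [0, 0, I, 0], [0, C, 0, D]]. -/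
/-!
Exchanging the two middle `d`-blocks of columns turns 𝒜 into `[[E, ℰ], [F, ℱ]]`, and the
symplectic condition into `EᵀF - FᵀE = J_d` and `Eᵀℱ = Fᵀℰ`. The same exchange turns `Lift(G)`
into `diag(I, G)` and `V_Lᵀ` into `[[I, L], [P, PᵀL]]`. Multiplying out the blocks, the
factorization reduces to `M_𝒜 + Pᵀ = FᵀE`, which is the first relation since `P - Pᵀ = J_d`, and
to `ℱ = E⁻ᵀFᵀℰ`, which is the second.
-/

open Matrix

variable {d : ℕ}

/-- The permutation matrix exchanging the second and third of the four `d`-blocks of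
coordinates. -/
def swapMid (d : ℕ) :
    Matrix ((Fin d ⊕ Fin d) ⊕ (Fin d ⊕ Fin d)) ((Fin d ⊕ Fin d) ⊕ (Fin d ⊕ Fin d)) ℝ :=
  fromBlocks (fromBlocks 1 0 0 0) Pmatᵀ Pmat (fromBlocks 0 0 0 1)

lemma Pmat_sub_transpose :
    (Pmat : Matrix (Fin d ⊕ Fin d) (Fin d ⊕ Fin d) ℝ) - Pmatᵀ = Jmat (Fin d) := by
  simp [Pmat, Jmat, fromBlocks_transpose, sub_eq_add_neg, fromBlocks_neg, fromBlocks_add]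

lemma Lmat_mul_self : (Lmat : Matrix (Fin d ⊕ Fin d) (Fin d ⊕ Fin d) ℝ) * Lmat = 1 := by
  simp [Lmat, fromBlocks_multiply, fromBlocks_one]

lemma transpose_swapMid : (swapMid d)ᵀ = swapMid d := by
  simp [swapMid, fromBlocks_transpose]

lemma swapMid_mul_self : swapMid d * swapMid d = 1 := by
  simp [swapMid, Pmat, fromBlocks_multiply, fromBlocks_transpose, fromBlocks_add, fromBlocks_one]

lemma swapMid_mul_Jmat_mul_swapMid :
    swapMid d * Jmat (Fin d ⊕ Fin d) * swapMid d =
      fromBlocks (Jmat (Fin d)) 0 0 (Jmat (Fin d)) := by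
  simp [swapMid, Jmat, Pmat, fromBlocks_multiply, fromBlocks_transpose, fromBlocks_add,
    fromBlocks_neg, fromBlocks_zero]

lemma quad_eq_fromBlocks_mul_swapMid
    (A11 A12 A13 A14 A21 A22 A23 A24 A31 A32 A33 A34 A41 A42 A43 A44 :
      Matrix (Fin d) (Fin d) ℝ) :
    quad A11 A12 A13 A14 A21 A22 A23 A24 A31 A32 A33 A34 A41 A42 A43 A44 =
      fromBlocks (fromBlocks A11 A13 A21 A23) (fromBlocks A12 A14 A22 A24)
        (fromBlocks A31 A33 A41 A43) (fromBlocks A32 A34 A42 A44) * swapMid d := by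
  simp [quad, swapMid, Pmat, fromBlocks_multiply, fromBlocks_transpose, fromBlocks_add]

lemma quad_lift_eq_swapMid_conj (G : Matrix (Fin d ⊕ Fin d) (Fin d ⊕ Fin d) ℝ) :
    quad 1 0 0 0 0 G.toBlocks₁₁ 0 G.toBlocks₁₂ 0 0 1 0 0 G.toBlocks₂₁ 0 G.toBlocks₂₂ =
      swapMid d * fromBlocks 1 0 0 G * swapMid d := by
  conv_rhs => rw [← fromBlocks_toBlocks G]
  simp [quad, swapMid, Pmat, fromBlocks_multiply, fromBlocks_transpose, fromBlocks_add]

lemma fromBlocks_one_Lmat_mul_swapMid :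
    fromBlocks 1 Lmat 0 1 * swapMid d = fromBlocks 1 Lmat Pmat (fromBlocks 0 0 0 1) := by
  simp [swapMid, Lmat, Pmat, fromBlocks_multiply, fromBlocks_transpose, fromBlocks_add,
    fromBlocks_one]

lemma transpose_mul_Jmat_mul_of_isSymplectic_mul_swapMid
    {N : Matrix ((Fin d ⊕ Fin d) ⊕ (Fin d ⊕ Fin d)) ((Fin d ⊕ Fin d) ⊕ (Fin d ⊕ Fin d)) ℝ}
    (h : IsSymplectic (N * swapMid d)) :
    Nᵀ * Jmat (Fin d ⊕ Fin d) * N = fromBlocks (Jmat (Fin d)) 0 0 (Jmat (Fin d)) := by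
  calc Nᵀ * Jmat _ * N
        = swapMid d * ((N * swapMid d)ᵀ * Jmat _ * (N * swapMid d)) * swapMid d := by
        simp only [transpose_mul, transpose_swapMid, ← mul_assoc, swapMid_mul_self, one_mul]
        rw [mul_assoc _ (swapMid d) (swapMid d), swapMid_mul_self, mul_one]
    _ = fromBlocks (Jmat (Fin d)) 0 0 (Jmat (Fin d)) := by rw [h, swapMid_mul_Jmat_mul_swapMid]

lemma fromBlocks_symplectic_relations {E F ℰ ℱ : Matrix (Fin d ⊕ Fin d) (Fin d ⊕ Fin d) ℝ}
    (h : (fromBlocks E ℰ F ℱ)ᵀ * Jmat (Fin d ⊕ Fin d) * fromBlocks E ℰ F ℱ =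
      fromBlocks (Jmat (Fin d)) 0 0 (Jmat (Fin d))) :
    Eᵀ * F - Fᵀ * E = Jmat (Fin d) ∧ Eᵀ * ℱ = Fᵀ * ℰ := by
  simp only [Jmat.eq_1 (Fin d ⊕ Fin d), fromBlocks_transpose, fromBlocks_multiply,
    Matrix.mul_zero, Matrix.mul_one, Matrix.mul_neg, neg_mul, add_zero, zero_add,
    fromBlocks_inj] at h
  obtain ⟨h₁₁, h₁₂, -, -⟩ := h
  exact ⟨by rw [← h₁₁]; abel, (neg_add_eq_zero.mp h₁₂).symm⟩

lemma Pmat_transpose_mul_Lmat :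
    (Pmatᵀ : Matrix (Fin d ⊕ Fin d) (Fin d ⊕ Fin d) ℝ) * Lmat = fromBlocks 0 0 0 1 := by
  simp [Pmat, Lmat, fromBlocks_transpose, fromBlocks_multiply]

lemma fromBlocks_eq_factorization {E F ℰ ℱ : Matrix (Fin d ⊕ Fin d) (Fin d ⊕ Fin d) ℝ}
    (hE : IsUnit E.det) (hEF : Eᵀ * F - Fᵀ * E = Jmat (Fin d)) (hℰ : Eᵀ * ℱ = Fᵀ * ℰ) :
    fromBlocks E ℰ F ℱ =
      fromBlocks E 0 0 E⁻¹ᵀ * fromBlocks 1 0 (Eᵀ * F - Pmat) 1 *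
        fromBlocks 1 Lmat Pmat (fromBlocks 0 0 0 1) * fromBlocks 1 0 0 (Lmat * E⁻¹ * ℰ) := by
  have hM : Eᵀ * F - Pmat + Pmatᵀ = Fᵀ * E := by
    rw [sub_add, Pmat_sub_transpose, ← hEF, sub_sub_cancel]
  have hET : IsUnit Eᵀ.det := by rwa [det_transpose]
  have hL (X : Matrix (Fin d ⊕ Fin d) (Fin d ⊕ Fin d) ℝ) : Lmat * (Lmat * X) = X := by
    rw [← mul_assoc, Lmat_mul_self, one_mul]
  simp only [fromBlocks_multiply, Matrix.mul_zero, Matrix.zero_mul, Matrix.mul_one, add_zero,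
    zero_add, ← Pmat_transpose_mul_Lmat, transpose_nonsing_inv]
  congr 1
  · simp only [mul_assoc, hL, mul_nonsing_inv_cancel_left _ _ hE]
  · rw [← mul_add, sub_add_cancel, nonsing_inv_mul_cancel_left _ _ hET]
  · simp only [mul_assoc, ← mul_add, ← add_mul, hM]
    rw [hL, mul_nonsing_inv_cancel_left _ _ hE, ← hℰ, nonsing_inv_mul_cancel_left _ _ hET]

/-- factorization 𝒜 = 𝒟_{E_𝒜⁻¹} V_{M_𝒜} V_Lᵀ Lift(G_𝒜) for
shift-invertible 𝒜 ∈ Sp(2d,ℝ). -/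
theorem stmt7 {d : ℕ}
    (A11 A12 A13 A14 A21 A22 A23 A24 A31 A32 A33 A34 A41 A42 A43 A44 :
      Matrix (Fin d) (Fin d) ℝ)
    (h : IsSymplectic
      (quad A11 A12 A13 A14 A21 A22 A23 A24 A31 A32 A33 A34 A41 A42 A43 A44))
    (hE : IsUnit (Matrix.fromBlocks A11 A13 A21 A23).det) :
    quad A11 A12 A13 A14 A21 A22 A23 A24 A31 A32 A33 A34 A41 A42 A43 A44 =
      Matrix.fromBlocks (Matrix.fromBlocks A11 A13 A21 A23) 0 0
          (((Matrix.fromBlocks A11 A13 A21 A23)⁻¹)ᵀ) *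
      Matrix.fromBlocks 1 0
          ((Matrix.fromBlocks A11 A13 A21 A23)ᵀ * Matrix.fromBlocks A31 A33 A41 A43 - Pmat) 1 *
      Matrix.fromBlocks 1 Lmat 0 1 *
      quad 1 0 0 0
        0 ((Lmat * (Matrix.fromBlocks A11 A13 A21 A23)⁻¹ *
              Matrix.fromBlocks A12 A14 A22 A24).toBlocks₁₁)
        0 ((Lmat * (Matrix.fromBlocks A11 A13 A21 A23)⁻¹ *
              Matrix.fromBlocks A12 A14 A22 A24).toBlocks₁₂)
        0 0 1 0
        0 ((Lmat * (Matrix.fromBlocks A11 A13 A21 A23)⁻¹ *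
              Matrix.fromBlocks A12 A14 A22 A24).toBlocks₂₁)
        0 ((Lmat * (Matrix.fromBlocks A11 A13 A21 A23)⁻¹ *
              Matrix.fromBlocks A12 A14 A22 A24).toBlocks₂₂) := by
  have hN := quad_eq_fromBlocks_mul_swapMid A11 A12 A13 A14 A21 A22 A23 A24 A31 A32 A33 A34
    A41 A42 A43 A44
  obtain ⟨hEF, hℰ⟩ :=
    fromBlocks_symplectic_relations (transpose_mul_Jmat_mul_of_isSymplectic_mul_swapMid (hN ▸ h))
  rw [quad_lift_eq_swapMid_conj, hN, fromBlocks_eq_factorization hE hEF hℰ,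
    ← fromBlocks_one_Lmat_mul_swapMid]
  simp only [mul_assoc]
end

section
/- Let A₁₁, A₂₁, A₁₃ ∈ ℝ^{d×d} with A₁₃ = A₁₃ᵀ and A₂₁ = A₂₁ᵀ. Then the 4d×4d matrix with d×d blocks 𝒜 = [[A₁₁, I − A₁₁, A₁₃, A₁₃], [A₂₁, −A₂₁, I − A₁₁ᵀ, −A₁₁ᵀ], [0, 0, I, I], [−I, I, 0, 0]] belongs to Sp(2d,ℝ). Conversely, if a matrix of this block form belongs to Sp(2d,ℝ), then A₁₃ and A₂₁ are symmetric. -/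
open Matrix

/-! Writing the 4d × 4d matrix as a 2 × 2 block matrix `[[A, B], [C, D]]` of 2d × 2d blocks,
`Sᵀ J S = J` amounts to `AᵀC` and `BᵀD` being symmetric and `AᵀD - CᵀB = 1`. For the matrix at
hand the last condition holds identically, while `AᵀC` and `BᵀD` are the block matrices
`[[-A₂₁ᵀ, A₂₁ᵀ], [A₂₁ᵀ, -A₂₁ᵀ]]` and `[[A₁₃ᵀ, A₁₃ᵀ], [A₁₃ᵀ, A₁₃ᵀ]]`, symmetric exactly when
`A₂₁` and `A₁₃` are. -/

theorem transpose_mul_jmat_mul_fromBlocks {n : Type*} [DecidableEq n] [Fintype n]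
    (A B C D : Matrix n n ℝ) :
    (fromBlocks A B C D)ᵀ * Jmat n * fromBlocks A B C D =
      fromBlocks (Aᵀ * C - Cᵀ * A) (Aᵀ * D - Cᵀ * B) (Bᵀ * C - Dᵀ * A) (Bᵀ * D - Dᵀ * B) := by
  simp only [Jmat, fromBlocks_transpose, fromBlocks_multiply]
  simp [sub_eq_add_neg, add_comm]

theorem isSymplectic_fromBlocks_iff {n : Type*} [DecidableEq n] [Fintype n]
    (A B C D : Matrix n n ℝ) :
    IsSymplectic (fromBlocks A B C D) ↔
      (Aᵀ * C).IsSymm ∧ (Bᵀ * D).IsSymm ∧ Aᵀ * D - Cᵀ * B = 1 := by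
  have sub_eq_zero_iff_isSymm (X Y : Matrix n n ℝ) : Xᵀ * Y - Yᵀ * X = 0 ↔ (Xᵀ * Y).IsSymm := by
    rw [sub_eq_zero, Matrix.IsSymm, transpose_mul, transpose_transpose, eq_comm]
  rw [IsSymplectic, transpose_mul_jmat_mul_fromBlocks, Jmat, fromBlocks_inj,
    sub_eq_zero_iff_isSymm, sub_eq_zero_iff_isSymm]
  constructor
  · rintro ⟨hAC, hcross, -, hBD⟩
    exact ⟨hAC, hBD, hcross⟩
  · rintro ⟨hAC, hBD, hcross⟩
    refine ⟨hAC, hcross, ?_, hBD⟩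
    have hcross_neg_transpose := congrArg (fun M => -Mᵀ) hcross
    simpa [transpose_sub, transpose_mul] using hcross_neg_transpose

/-- the covariant-form block matrix is symplectic iff A₁₃ and A₂₁
are symmetric. -/
theorem stmt12 {d : ℕ} (A11 A21 A13 : Matrix (Fin d) (Fin d) ℝ) :
    IsSymplectic
      (quad A11 (1 - A11) A13 A13
        A21 (-A21) (1 - A11ᵀ) (-A11ᵀ)
        0 0 1 1
        (-1) 1 0 0) ↔ (A13ᵀ = A13 ∧ A21ᵀ = A21) := by
  rw [quad, isSymplectic_fromBlocks_iff]
  simp only [fromBlocks_transpose, fromBlocks_multiply, mul_zero, mul_neg, mul_one, zero_add,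
    transpose_sub, transpose_one, transpose_neg, neg_neg, transpose_transpose, add_zero,
    transpose_zero, zero_mul, neg_mul, one_mul, neg_sub]
  have hcross : fromBlocks A11ᵀ A11ᵀ (1 - A11ᵀ) (1 - A11ᵀ) -
      fromBlocks (A11ᵀ - 1) A11ᵀ (1 - A11ᵀ) (-A11ᵀ) = 1 := by
    rw [sub_eq_add_neg, fromBlocks_neg, fromBlocks_add, ← fromBlocks_one]
    congr 1 <;> abel
  simp only [isSymm_fromBlocks_iff, isSymm_neg_iff, isSymm_transpose_iff, transpose_transpose,
    and_self_left, hcross, and_true]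
  exact ⟨fun h => ⟨h.2.1, h.1.1⟩, fun ⟨h13, h21⟩ => ⟨⟨h21, h21.symm, h21⟩, h13, h13.symm, h13⟩⟩
end

section
/- Let 0 < τ < 1, d ≥ 1, and let f, g be Schwartz functions on ℝ^d. Then for all x, ξ ∈ ℝ^d, W_τ(f,g)(x,ξ) = τ^{−d/2}(1−τ)^{−d/2} e^{2πi x·ξ/τ} · V_{𝔗_τ g} f(x/(1−τ), ξ/τ), where 𝔗_τ g(t) = (1−τ)^{d/2} τ^{−d/2} g(−((1−τ)/τ) t). Equivalently, W_τ(f,g)(x,ξ) = ⟨f, τ^{−d/2}(1−τ)^{−d/2} e^{−2πi x·ξ/τ} π(x/(1−τ), ξ/τ) 𝔗_τ g⟩. -/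
open MeasureTheory Complex

/-- Euclidean scalar product on ℝ^d. -/
noncomputable def dotR {d : ℕ} (x y : Fin d → ℝ) : ℝ := ∑ i, x i * y i

/-- Time-frequency shift π(x,ξ)g(t) = e^{2πi ξ·t} g(t−x). -/
noncomputable def tfshift {d : ℕ} (x ξ : Fin d → ℝ) (g : (Fin d → ℝ) → ℂ)
    (t : Fin d → ℝ) : ℂ :=
  Complex.exp (2 * Real.pi * Complex.I * (dotR ξ t)) * g (t - x)

/-- Short-time Fourier transform V_g f(x,ξ) = ⟨f, π(x,ξ)g⟩. -/
noncomputable def stft {d : ℕ} (g f : (Fin d → ℝ) → ℂ) (x ξ : Fin d → ℝ) : ℂ :=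
  ∫ t, f t * (starRingEnd ℂ) (tfshift x ξ g t)

/-- τ-Wigner distribution. -/
noncomputable def wignerTau {d : ℕ} (τ : ℝ) (f g : (Fin d → ℝ) → ℂ)
    (x ξ : Fin d → ℝ) : ℂ :=
  ∫ t, f (x + τ • t) * (starRingEnd ℂ) (g (x - (1 - τ) • t)) *
    Complex.exp (-(2 * Real.pi * Complex.I * (dotR ξ t)))

/-- The dilation 𝔗_τ g(t) = (1−τ)^{d/2} τ^{−d/2} g(−((1−τ)/τ) t). -/
noncomputable def dil {d : ℕ} (τ : ℝ) (g : (Fin d → ℝ) → ℂ) (t : Fin d → ℝ) : ℂ :=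
  ((((1 - τ) ^ ((d : ℝ) / 2) * τ ^ (-(d : ℝ) / 2) : ℝ)) : ℂ) * g ((-(1 - τ) / τ) • t)

/-!
Substitute `s = x + τ t` in the integral defining `W_τ(f,g)(x,ξ)`. Then
`x - (1-τ) t = -((1-τ)/τ) (s - x/(1-τ))`, so the conjugated factor is the dilate `𝔗_τ g`
translated by `x/(1-τ)`, while `ξ·t = (ξ/τ)·s - x·ξ/τ` splits the phase into the modulation by
`ξ/τ` and the chirp `e^{2πi x·ξ/τ}`. The Jacobian `τ^d` cancels against the product
`τ^{-d/2}(1-τ)^{-d/2} · (1-τ)^{d/2}τ^{-d/2} = τ^{-d}` of the two normalising constants.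
-/

section ChangeOfVariables

variable {E F : Type*} [NormedAddCommGroup E] [NormedSpace ℝ E] [MeasurableSpace E]
  [BorelSpace E] [FiniteDimensional ℝ E] (μ : Measure E) [μ.IsAddHaarMeasure]
  [NormedAddCommGroup F] [NormedSpace ℝ F]

theorem integral_comp_add_smul (h : E → F) (x : E) (c : ℝ) :
    ∫ t, h (x + c • t) ∂μ = |(c ^ Module.finrank ℝ E)⁻¹| • ∫ t, h t ∂μ := by
  rw [Measure.integral_comp_smul μ (fun s => h (x + s)) c, integral_add_left_eq_self]

end ChangeOfVariables

theorem conj_exp_two_pi_I_mul_ofReal (r : ℝ) :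
    starRingEnd ℂ (exp (2 * Real.pi * I * r)) = exp (-(2 * Real.pi * I * r)) := by
  rw [← exp_conj]
  simp [map_ofNat]

theorem neg_div_smul_add_smul_sub_inv_smul {E : Type*} [AddCommGroup E] [Module ℝ E]
    {τ : ℝ} (hτ : τ ≠ 0) (hτ' : 1 - τ ≠ 0) (x t : E) :
    (-(1 - τ) / τ) • ((x + τ • t) - (1 - τ)⁻¹ • x) = x - (1 - τ) • t := by
  match_scalars <;> field_simp
  ring

theorem dotR_eq_dotProduct {d : ℕ} (x y : Fin d → ℝ) : dotR x y = x ⬝ᵥ y := rfl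

theorem dotR_inv_smul_add_smul {d : ℕ} {τ : ℝ} (hτ : τ ≠ 0) (x ξ t : Fin d → ℝ) :
    dotR (τ⁻¹ • ξ) (x + τ • t) = dotR x ξ / τ + dotR ξ t := by
  simp only [dotR_eq_dotProduct, smul_dotProduct, dotProduct_add, dotProduct_smul,
    dotProduct_comm ξ x, smul_eq_mul]
  field_simp

theorem wigner_constant_mul_dil_constant {d : ℕ} {τ : ℝ} (hτ0 : 0 < τ) (hτ1 : τ < 1) :
    τ ^ (-(d : ℝ) / 2) * (1 - τ) ^ (-(d : ℝ) / 2) * ((1 - τ) ^ ((d : ℝ) / 2) * τ ^ (-(d : ℝ) / 2))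
      = (τ ^ d)⁻¹ := by
  have h1τ : 0 < 1 - τ := by linarith
  calc _ = τ ^ (-(d : ℝ) / 2 + -(d : ℝ) / 2) * (1 - τ) ^ (-(d : ℝ) / 2 + (d : ℝ) / 2) := by
        rw [Real.rpow_add hτ0, Real.rpow_add h1τ]; ring
    _ = (τ ^ d)⁻¹ := by
        rw [show -(d : ℝ) / 2 + -(d : ℝ) / 2 = -(d : ℝ) by ring, neg_div, neg_add_cancel,
          Real.rpow_zero, mul_one, Real.rpow_neg hτ0.le, Real.rpow_natCast]

noncomputable def wignerWindow {d : ℕ} (τ : ℝ) (g : (Fin d → ℝ) → ℂ) (x ξ : Fin d → ℝ)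
    (t : Fin d → ℝ) : ℂ :=
  ((τ ^ (-(d : ℝ) / 2) * (1 - τ) ^ (-(d : ℝ) / 2) : ℝ) : ℂ) *
    exp (-(2 * Real.pi * I * (dotR x ξ / τ))) *
    tfshift ((1 - τ)⁻¹ • x) (τ⁻¹ • ξ) (dil τ g) t

theorem wignerWindow_add_smul {d : ℕ} {τ : ℝ} (hτ0 : 0 < τ) (hτ1 : τ < 1)
    (g : (Fin d → ℝ) → ℂ) (x ξ t : Fin d → ℝ) :
    wignerWindow τ g x ξ (x + τ • t) =
      ((τ ^ d)⁻¹ : ℝ) * exp (2 * Real.pi * I * dotR ξ t) * g (x - (1 - τ) • t) := by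
  have hexp : exp (-(2 * Real.pi * I * (dotR x ξ / τ))) *
      exp (2 * Real.pi * I * (dotR x ξ / τ + dotR ξ t : ℝ)) = exp (2 * Real.pi * I * dotR ξ t) := by
    rw [← exp_add]
    push_cast
    ring_nf
  rw [wignerWindow, tfshift, dil, dotR_inv_smul_add_smul hτ0.ne',
    neg_div_smul_add_smul_sub_inv_smul hτ0.ne' (sub_ne_zero.2 hτ1.ne'), ← hexp,
    ← wigner_constant_mul_dil_constant hτ0 hτ1]
  push_cast
  ring

theorem wignerTau_integrand_eq {d : ℕ} {τ : ℝ} (hτ0 : 0 < τ) (hτ1 : τ < 1)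
    (f g : (Fin d → ℝ) → ℂ) (x ξ t : Fin d → ℝ) :
    f (x + τ • t) * starRingEnd ℂ (g (x - (1 - τ) • t)) *
        exp (-(2 * Real.pi * I * dotR ξ t)) =
      (τ ^ d : ℝ) • (f (x + τ • t) * starRingEnd ℂ (wignerWindow τ g x ξ (x + τ • t))) := by
  have hτd : (τ : ℂ) ^ d ≠ 0 := pow_ne_zero _ (ofReal_ne_zero.2 hτ0.ne')
  rw [wignerWindow_add_smul hτ0 hτ1, map_mul, map_mul, conj_exp_two_pi_I_mul_ofReal,
    conj_ofReal, real_smul]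
  push_cast
  field_simp

theorem stmt14_general {d : ℕ} (τ : ℝ) (hτ0 : 0 < τ) (hτ1 : τ < 1)
    (f g : SchwartzMap ((Fin d) → ℝ) ℂ) :
    ∀ x ξ : Fin d → ℝ,
      wignerTau τ (⇑f) (⇑g) x ξ =
        (((τ ^ (-(d : ℝ) / 2) * (1 - τ) ^ (-(d : ℝ) / 2) : ℝ)) : ℂ) *
          Complex.exp (2 * Real.pi * Complex.I * (dotR x ξ / τ)) *
          stft (dil τ (⇑g)) (⇑f) ((1 - τ)⁻¹ • x) (τ⁻¹ • ξ) ∧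
      wignerTau τ (⇑f) (⇑g) x ξ =
        ∫ t, f t * (starRingEnd ℂ)
          ((((τ ^ (-(d : ℝ) / 2) * (1 - τ) ^ (-(d : ℝ) / 2) : ℝ)) : ℂ) *
            Complex.exp (-(2 * Real.pi * Complex.I * (dotR x ξ / τ))) *
            tfshift ((1 - τ)⁻¹ • x) (τ⁻¹ • ξ) (dil τ (⇑g)) t) := by
  intro x ξ
  have hwindow : wignerTau τ f g x ξ = ∫ t, f t * starRingEnd ℂ (wignerWindow τ g x ξ t) := by
    simp_rw [wignerTau, wignerTau_integrand_eq hτ0 hτ1, integral_smul,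
      integral_comp_add_smul volume (fun s => f s * starRingEnd ℂ (wignerWindow τ g x ξ s)),
      Module.finrank_fin_fun, smul_smul]
    rw [abs_of_pos (by positivity), mul_inv_cancel₀ (by positivity), one_smul]
  refine ⟨?_, hwindow⟩
  rw [hwindow, stft, ← integral_const_mul]
  congr 1 with t
  rw [wignerWindow, map_mul, map_mul, conj_ofReal, ← ofReal_div,
    ← conj_exp_two_pi_I_mul_ofReal, conj_conj]
  ring

/-- the τ-Wigner distribution is a rescaled STFT up to chirps:
W_τ(f,g)(x,ξ) = τ^{−d/2}(1−τ)^{−d/2} e^{2πi x·ξ/τ} V_{𝔗_τ g}f(x/(1−τ), ξ/τ),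
equivalently W_τ(f,g)(x,ξ) = ⟨f, τ^{−d/2}(1−τ)^{−d/2} e^{−2πi x·ξ/τ}
π(x/(1−τ), ξ/τ)𝔗_τ g⟩. -/
theorem stmt14 {d : ℕ} (hd : 1 ≤ d) (τ : ℝ) (hτ0 : 0 < τ) (hτ1 : τ < 1)
    (f g : SchwartzMap ((Fin d) → ℝ) ℂ) :
    ∀ x ξ : Fin d → ℝ,
      wignerTau τ (⇑f) (⇑g) x ξ =
        (((τ ^ (-(d : ℝ) / 2) * (1 - τ) ^ (-(d : ℝ) / 2) : ℝ)) : ℂ) *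
          Complex.exp (2 * Real.pi * Complex.I * (dotR x ξ / τ)) *
          stft (dil τ (⇑g)) (⇑f) ((1 - τ)⁻¹ • x) (τ⁻¹ • ξ) ∧
      wignerTau τ (⇑f) (⇑g) x ξ =
        ∫ t, f t * (starRingEnd ℂ)
          ((((τ ^ (-(d : ℝ) / 2) * (1 - τ) ^ (-(d : ℝ) / 2) : ℝ)) : ℂ) *
            Complex.exp (-(2 * Real.pi * Complex.I * (dotR x ξ / τ))) *
            tfshift ((1 - τ)⁻¹ • x) (τ⁻¹ • ξ) (dil τ (⇑g)) t) :=
  stmt14_general τ hτ0 hτ1 f g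
end
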